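/- arXiv:1701.08420 — 3 statements merged into one kernel-verified Lean document; each statement's English description precedes it below -/
import Mathlib

section
/- Let X = (X_d, d ∈ D(N)) be an exchangeable random network on a finite node set N. Define the dependence skeleton sk(X) to be the simple undirected graph with vertex set D(N) in which two distinct dyads d and e are NOT adjacent if and only if there exists some subset S ⊆ D(N)\{d,e} such that X_d and X_e are conditionally independent given (X_s, s ∈ S). Then sk(X) is one of the following four graphs: (a) the empty graph on D(N); (b) the incidence graph L(N); (c) the complement of the incidence graph L(N); (d) the complete graph on D(N). -/
open MeasureTheory

/-- The type of dyads over a node set `V`: unordered pairs of distinct nodes. -/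
abbrev Dyad (V : Type*) : Type _ := {d : Sym2 V // ¬ d.IsDiag}

/-- The action of a permutation of the node set on dyads. -/
def dyadPerm {V : Type*} (π : Equiv.Perm V) (d : Dyad V) : Dyad V :=
  ⟨d.1.map π, by rw [Sym2.isDiag_map (Equiv.injective π)]; exact d.2⟩

/-- A random network `X = (X_d, d ∈ D(N))` is exchangeable if its joint distribution
is invariant under every relabeling of the node set. -/
def IsExchangeable {V Ω : Type*} [MeasurableSpace Ω] (μ : Measure Ω)
    (X : Dyad V → Ω → Bool) : Prop :=
  ∀ (π : Equiv.Perm V) (f : Dyad V → Bool),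
    μ {ω | ∀ d : Dyad V, X (dyadPerm π d) ω = f d} = μ {ω | ∀ d : Dyad V, X d ω = f d}

/-- `X_d` and `X_e` are conditionally independent given `(X_s, s ∈ S)`; for `S = ∅`
this is (unconditional) independence of `X_d` and `X_e`. -/
def CondIndepGiven {V Ω : Type*} [MeasurableSpace Ω] (μ : Measure Ω)
    (X : Dyad V → Ω → Bool) (d e : Dyad V) (S : Finset (Dyad V)) : Prop :=
  ∀ (a b : Bool) (g : Dyad V → Bool),
    μ {ω | X d ω = a ∧ X e ω = b ∧ ∀ s ∈ S, X s ω = g s} * μ {ω | ∀ s ∈ S, X s ω = g s}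
      = μ {ω | X d ω = a ∧ ∀ s ∈ S, X s ω = g s} *
          μ {ω | X e ω = b ∧ ∀ s ∈ S, X s ω = g s}

/-- Adjacency in the dependence skeleton `sk(X)`: two distinct dyads `d`, `e` are
adjacent iff there is NO subset `S ⊆ D(N) \ {d, e}` with `X_d ⫫ X_e | X_S`. -/
def SkelAdj {V Ω : Type*} [MeasurableSpace Ω] (μ : Measure Ω)
    (X : Dyad V → Ω → Bool) (d e : Dyad V) : Prop :=
  d ≠ e ∧ ¬ ∃ S : Finset (Dyad V), d ∉ S ∧ e ∉ S ∧ CondIndepGiven μ X d e S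

/-- The incidence graph `L(N)`: two distinct dyads are adjacent iff they share a node. -/
def incidenceGraph (V : Type*) : SimpleGraph (Dyad V) where
  Adj d e := d ≠ e ∧ ∃ i, i ∈ d.1 ∧ i ∈ e.1
  symm := ⟨by rintro d e ⟨hne, i, h1, h2⟩; exact ⟨hne.symm, i, h2, h1⟩⟩
  loopless := ⟨by rintro d ⟨hne, _⟩; exact hne rfl⟩

/-! Exchangeability makes the joint law of `X` invariant under relabelling the nodes, so a
permutation of `N` carries each conditional independence statement, separating set included,
to another one: the skeleton is invariant under the induced action on dyads. This action has
exactly two orbits on pairs of distinct dyads, the pairs sharing a node (edges of `L(N)`) and the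
disjoint pairs (edges of its complement). Each orbit therefore lies entirely inside or entirely
outside `sk(X)`, which leaves four possibilities. -/

section

variable {V Ω : Type*}

lemma dyadPerm_inv_dyadPerm (π : Equiv.Perm V) (d : Dyad V) :
    dyadPerm π⁻¹ (dyadPerm π d) = d :=
  Subtype.ext <| by simp [dyadPerm, Sym2.map_map]

lemma dyadPerm_injective (π : Equiv.Perm V) : Function.Injective (dyadPerm π) :=
  Function.LeftInverse.injective (g := dyadPerm π⁻¹) (dyadPerm_inv_dyadPerm π)

lemma exists_dyadPerm_of_injective {n : ℕ} {a b : Fin n → V} (ha : a.Injective)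
    (hb : b.Injective) {d₀ e₀ d e : Dyad V} {i j k l : Fin n}
    (hd₀ : d₀.1 = s(a i, a j)) (he₀ : e₀.1 = s(a k, a l))
    (hd : d.1 = s(b i, b j)) (he : e.1 = s(b k, b l)) :
    ∃ π : Equiv.Perm V, dyadPerm π d₀ = d ∧ dyadPerm π e₀ = e := by
  obtain ⟨π, hπ⟩ := Equiv.Perm.exists_extending_pair a b ha hb
  exact ⟨π, Subtype.ext (by simp [dyadPerm, hd₀, hd, hπ]),
    Subtype.ext (by simp [dyadPerm, he₀, he, hπ])⟩

lemma exists_eq_of_incidenceGraph_adj {d e : Dyad V} (h : (incidenceGraph V).Adj d e) :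
    ∃ x y z : V, [x, y, z].Nodup ∧ d.1 = s(x, y) ∧ e.1 = s(x, z) := by
  obtain ⟨hne, x, hxd, hxe⟩ := h
  obtain ⟨y, hy⟩ := Sym2.mem_iff_exists.mp hxd
  obtain ⟨z, hz⟩ := Sym2.mem_iff_exists.mp hxe
  refine ⟨x, y, z, ?_, hy, hz⟩
  have hxy : x ≠ y := by rintro rfl; exact d.2 (hy ▸ Sym2.mk_isDiag_iff.mpr rfl)
  have hxz : x ≠ z := by rintro rfl; exact e.2 (hz ▸ Sym2.mk_isDiag_iff.mpr rfl)
  have hyz : y ≠ z := by rintro rfl; exact hne (Subtype.ext (hy.trans hz.symm))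
  simp [hxy, hxz, hyz]

lemma exists_eq_of_not_incidenceGraph_adj {d e : Dyad V} (hne : d ≠ e)
    (h : ¬ (incidenceGraph V).Adj d e) :
    ∃ x y z w : V, [x, y, z, w].Nodup ∧ d.1 = s(x, y) ∧ e.1 = s(z, w) := by
  obtain ⟨d, hd⟩ := d
  obtain ⟨e, he⟩ := e
  induction d using Sym2.ind with | _ x y => ?_
  induction e using Sym2.ind with | _ z w => ?_
  refine ⟨x, y, z, w, ?_, rfl, rfl⟩
  simp only [incidenceGraph, ne_eq, hne, not_false_eq_true, true_and, not_exists, not_and,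
    Sym2.mem_iff] at h
  rw [Sym2.mk_isDiag_iff] at hd he
  simp_all

lemma exists_dyadPerm_of_adj_iff {d₀ e₀ d e : Dyad V} (h₀ : d₀ ≠ e₀) (h : d ≠ e)
    (hadj : (incidenceGraph V).Adj d₀ e₀ ↔ (incidenceGraph V).Adj d e) :
    ∃ π : Equiv.Perm V, dyadPerm π d₀ = d ∧ dyadPerm π e₀ = e := by
  by_cases had : (incidenceGraph V).Adj d e
  · obtain ⟨x, y, z, hxyz, hd₀, he₀⟩ := exists_eq_of_incidenceGraph_adj (hadj.mpr had)
    obtain ⟨x', y', z', hxyz', hd, he⟩ := exists_eq_of_incidenceGraph_adj had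
    exact exists_dyadPerm_of_injective (a := ![x, y, z]) (b := ![x', y', z'])
      (List.nodup_ofFn.mp hxyz) (List.nodup_ofFn.mp hxyz') (i := 0) (j := 1) (k := 0) (l := 2)
      hd₀ he₀ hd he
  · obtain ⟨x, y, z, w, hxyzw, hd₀, he₀⟩ :=
      exists_eq_of_not_incidenceGraph_adj h₀ (mt hadj.mp had)
    obtain ⟨x', y', z', w', hxyzw', hd, he⟩ := exists_eq_of_not_incidenceGraph_adj h had
    exact exists_dyadPerm_of_injective (a := ![x, y, z, w]) (b := ![x', y', z', w'])
      (List.nodup_ofFn.mp hxyzw) (List.nodup_ofFn.mp hxyzw') (i := 0) (j := 1) (k := 2) (l := 3)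
      hd₀ he₀ hd he

section Exchangeable

variable [Fintype V] [MeasurableSpace Ω] {μ : Measure Ω} {X : Dyad V → Ω → Bool}

theorem IsExchangeable.map_dyadPerm (hmeas : ∀ d, Measurable (X d))
    (hexch : IsExchangeable μ X) (π : Equiv.Perm V) :
    μ.map (fun ω d => X (dyadPerm π d) ω) = μ.map (fun ω d => X d ω) := by
  refine Measure.ext_iff_singleton.mpr fun f => ?_
  rw [Measure.map_apply (measurable_pi_lambda _ fun d => hmeas _) (measurableSet_singleton f),
    Measure.map_apply (measurable_pi_lambda _ hmeas) (measurableSet_singleton f)]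
  simpa [Set.preimage, funext_iff] using hexch π f

theorem IsExchangeable.measure_dyadPerm (hmeas : ∀ d, Measurable (X d))
    (hexch : IsExchangeable μ X) (π : Equiv.Perm V) (P : (Dyad V → Bool) → Prop) :
    μ {ω | P fun d => X (dyadPerm π d) ω} = μ {ω | P fun d => X d ω} := by
  have hP : MeasurableSet {f : Dyad V → Bool | P f} := (Set.toFinite _).measurableSet
  have := congrArg (· {f | P f}) (hexch.map_dyadPerm hmeas π)
  simpa [Measure.map_apply (measurable_pi_lambda _ fun d => hmeas _) hP,
    Measure.map_apply (measurable_pi_lambda _ hmeas) hP] using this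

theorem IsExchangeable.condIndepGiven_dyadPerm (hmeas : ∀ d, Measurable (X d))
    (hexch : IsExchangeable μ X) (π : Equiv.Perm V) {d e : Dyad V} {S : Finset (Dyad V)}
    (h : CondIndepGiven μ X d e S) :
    CondIndepGiven μ X (dyadPerm π d) (dyadPerm π e)
      (S.map ⟨dyadPerm π, dyadPerm_injective π⟩) := by
  intro a b g
  simp only [Finset.forall_mem_map, Function.Embedding.coeFn_mk]
  rw [hexch.measure_dyadPerm hmeas π fun f => f d = a ∧ f e = b ∧ ∀ s ∈ S, f s = g (dyadPerm π s),
    hexch.measure_dyadPerm hmeas π fun f => ∀ s ∈ S, f s = g (dyadPerm π s),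
    hexch.measure_dyadPerm hmeas π fun f => f d = a ∧ ∀ s ∈ S, f s = g (dyadPerm π s),
    hexch.measure_dyadPerm hmeas π fun f => f e = b ∧ ∀ s ∈ S, f s = g (dyadPerm π s)]
  exact h a b (g ∘ dyadPerm π)

theorem IsExchangeable.exists_condIndepGiven_dyadPerm (hmeas : ∀ d, Measurable (X d))
    (hexch : IsExchangeable μ X) (π : Equiv.Perm V) {d e : Dyad V}
    (h : ∃ S, d ∉ S ∧ e ∉ S ∧ CondIndepGiven μ X d e S) :
    ∃ S, dyadPerm π d ∉ S ∧ dyadPerm π e ∉ S ∧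
      CondIndepGiven μ X (dyadPerm π d) (dyadPerm π e) S := by
  obtain ⟨S, hd, he, hS⟩ := h
  exact ⟨_, mt (Finset.mem_map' _).mp hd, mt (Finset.mem_map' _).mp he,
    hexch.condIndepGiven_dyadPerm hmeas π hS⟩

theorem IsExchangeable.skelAdj_dyadPerm (hmeas : ∀ d, Measurable (X d))
    (hexch : IsExchangeable μ X) (π : Equiv.Perm V) {d e : Dyad V} (h : SkelAdj μ X d e) :
    SkelAdj μ X (dyadPerm π d) (dyadPerm π e) := by
  refine ⟨(dyadPerm_injective π).ne h.1, fun hsep => h.2 ?_⟩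
  simpa only [dyadPerm_inv_dyadPerm] using hexch.exists_condIndepGiven_dyadPerm hmeas π⁻¹ hsep

theorem IsExchangeable.skelAdj_iff (hmeas : ∀ d, Measurable (X d))
    (hexch : IsExchangeable μ X) (d e : Dyad V) :
    SkelAdj μ X d e ↔ d ≠ e ∧
      ((incidenceGraph V).Adj d e ∧ (∃ d₀ e₀, SkelAdj μ X d₀ e₀ ∧ (incidenceGraph V).Adj d₀ e₀) ∨
        ¬ (incidenceGraph V).Adj d e ∧
          ∃ d₀ e₀, SkelAdj μ X d₀ e₀ ∧ ¬ (incidenceGraph V).Adj d₀ e₀) := by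
  constructor
  · intro h
    by_cases hde : (incidenceGraph V).Adj d e
    exacts [⟨h.1, .inl ⟨hde, d, e, h, hde⟩⟩, ⟨h.1, .inr ⟨hde, d, e, h, hde⟩⟩]
  · rintro ⟨hne, ⟨hde, d₀, e₀, h₀, hde₀⟩ | ⟨hde, d₀, e₀, h₀, hde₀⟩⟩
    · obtain ⟨π, rfl, rfl⟩ := exists_dyadPerm_of_adj_iff h₀.1 hne (iff_of_true hde₀ hde)
      exact hexch.skelAdj_dyadPerm hmeas π h₀
    · obtain ⟨π, rfl, rfl⟩ := exists_dyadPerm_of_adj_iff h₀.1 hne (iff_of_false hde₀ hde)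
      exact hexch.skelAdj_dyadPerm hmeas π h₀

end Exchangeable

end

theorem stmt1_general {V Ω : Type*} [Fintype V] [MeasurableSpace Ω]
    (μ : Measure Ω) (X : Dyad V → Ω → Bool)
    (hmeas : ∀ d : Dyad V, Measurable (X d))
    (hexch : IsExchangeable μ X) :
    (∀ d e : Dyad V, ¬ SkelAdj μ X d e) ∨
    (∀ d e : Dyad V, SkelAdj μ X d e ↔ (incidenceGraph V).Adj d e) ∨
    (∀ d e : Dyad V, SkelAdj μ X d e ↔ ((incidenceGraph V)ᶜ).Adj d e) ∨
    (∀ d e : Dyad V, SkelAdj μ X d e ↔ d ≠ e) := by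
  have key := hexch.skelAdj_iff hmeas
  generalize (∃ d₀ e₀, SkelAdj μ X d₀ e₀ ∧ (incidenceGraph V).Adj d₀ e₀) = A at key
  generalize (∃ d₀ e₀, SkelAdj μ X d₀ e₀ ∧ ¬ (incidenceGraph V).Adj d₀ e₀) = B at key
  by_cases hA : A <;> by_cases hB : B
  · refine .inr <| .inr <| .inr fun d e => ?_
    simp only [key, hA, hB, and_true, or_not]
  · refine .inr <| .inl fun d e => ?_
    simp only [key, hA, hB, and_true, and_false, or_false]
    exact ⟨And.right, fun h => ⟨h.ne, h⟩⟩
  · refine .inr <| .inr <| .inl fun d e => ?_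
    simp only [key, hA, hB, and_true, and_false, false_or, SimpleGraph.compl_adj]
  · exact .inl fun d e => by simp only [key, hA, hB, and_false, or_self, not_false_eq_true]

/-- The dependence skeleton of an exchangeable random network is the empty
graph, the incidence graph `L(N)`, the complement of `L(N)`, or the complete graph. -/
theorem stmt1 {V Ω : Type*} [Fintype V] [DecidableEq V] [MeasurableSpace Ω]
    (μ : Measure Ω) [IsProbabilityMeasure μ] (X : Dyad V → Ω → Bool)
    (hmeas : ∀ d : Dyad V, Measurable (X d))
    (hexch : IsExchangeable μ X) :
    (∀ d e : Dyad V, ¬ SkelAdj μ X d e) ∨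
    (∀ d e : Dyad V, SkelAdj μ X d e ↔ (incidenceGraph V).Adj d e) ∨
    (∀ d e : Dyad V, SkelAdj μ X d e ↔ ((incidenceGraph V)ᶜ).Adj d e) ∨
    (∀ d e : Dyad V, SkelAdj μ X d e ↔ d ≠ e) :=
  stmt1_general μ X hmeas hexch
end

section
/- Let X = (X_d, d ∈ D(N)) be a random network on a finite node set N, with Möbius parameters z_B = P(X_d = 1 for all d ∈ B) for nonempty B ⊆ D(N). Then X is exchangeable if and only if z_B = z_{B′} whenever B, B′ ⊆ D(N) are nonempty edge sets whose associated graphs (without isolated vertices) are isomorphic. -/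
open MeasureTheory

section aux
variable {I Ω : Type*} [Fintype I] [DecidableEq I] [MeasurableSpace Ω]

/-- The configuration event: `X` equals the indicator of `S` everywhere. -/
def cfgSet (X : I → Ω → Bool) (S : Finset I) : Set Ω := {ω | ∀ i, X i ω = decide (i ∈ S)}

/-- The "all true on `T`" event. -/
def allSet (X : I → Ω → Bool) (T : Finset I) : Set Ω := {ω | ∀ i ∈ T, X i ω = true}

lemma cfgSet_measurable (X : I → Ω → Bool) (hX : ∀ i, Measurable (X i)) (S : Finset I) :
    MeasurableSet (cfgSet X S) := by
  have h : cfgSet X S = ⋂ i, X i ⁻¹' {decide (i ∈ S)} := by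
    ext ω; simp [cfgSet]
  rw [h]
  exact MeasurableSet.iInter fun i => (hX i) (measurableSet_singleton _)

lemma allSet_eq_biUnion (X : I → Ω → Bool) (T : Finset I) :
    allSet X T = ⋃ S ∈ Finset.univ.filter (fun S : Finset I => T ⊆ S), cfgSet X S := by
  ext ω
  simp only [Set.mem_iUnion, Finset.mem_filter, Finset.mem_univ, true_and, allSet, cfgSet,
    Set.mem_setOf_eq]
  constructor
  · intro h
    refine ⟨Finset.univ.filter (fun i => X i ω = true), ?_, ?_⟩
    · intro i hi; simp [h i hi]
    · intro i
      by_cases hx : X i ω = true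
      · simp [hx]
      · simp [hx, Bool.eq_false_iff.mpr hx]
  · rintro ⟨S, hTS, hω⟩ i hi
    rw [hω i]; simp [hTS hi]

lemma measure_allSet (μ : Measure Ω) (X : I → Ω → Bool) (hX : ∀ i, Measurable (X i))
    (T : Finset I) :
    μ (allSet X T) =
      ∑ S ∈ Finset.univ.filter (fun S : Finset I => T ⊆ S), μ (cfgSet X S) := by
  rw [allSet_eq_biUnion]
  refine measure_biUnion_finset ?_ (fun S _ => cfgSet_measurable X hX S)
  intro S _ S' _ hne
  refine Set.disjoint_left.mpr fun ω h1 h2 => hne ?_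
  ext i
  have := (h1 i).symm.trans (h2 i)
  simpa using this
end aux

section aux2
variable {I Ω : Type*} [Fintype I] [DecidableEq I] [MeasurableSpace Ω]

lemma cfg_eq_of_all_eq (μ : Measure Ω) [IsProbabilityMeasure μ]
    (X Y : I → Ω → Bool) (hX : ∀ i, Measurable (X i)) (hY : ∀ i, Measurable (Y i))
    (hz : ∀ S : Finset I, μ (allSet X S) = μ (allSet Y S)) :
    ∀ T : Finset I, μ (cfgSet X T) = μ (cfgSet Y T) := by
  suffices h : ∀ n (T : Finset I), (Finset.univ \ T).card ≤ n →
      (μ (cfgSet X T)).toReal = (μ (cfgSet Y T)).toReal by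
    intro T
    exact (ENNReal.toReal_eq_toReal_iff' (measure_ne_top μ _) (measure_ne_top μ _)).mp
      (h (Finset.univ \ T).card T le_rfl)
  intro n
  induction n with
  | zero =>
    intro T hT
    have hTu : T = Finset.univ := by
      have h0 : (Finset.univ \ T) = ∅ := Finset.card_eq_zero.mp (Nat.le_zero.mp hT)
      have : Finset.univ ⊆ T := by
        intro i _
        by_contra hi
        have : i ∈ Finset.univ \ T := by simp [hi]
        simp [h0] at this
      exact (Finset.eq_univ_iff_forall.mpr fun i => this (Finset.mem_univ i))
    subst hTu
    have hXeq : cfgSet X Finset.univ = allSet X Finset.univ := by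
      ext ω; simp [cfgSet, allSet]
    have hYeq : cfgSet Y Finset.univ = allSet Y Finset.univ := by
      ext ω; simp [cfgSet, allSet]
    rw [hXeq, hYeq, hz]
  | succ n ih =>
    intro T hT
    have hmemT : T ∈ Finset.univ.filter (fun S : Finset I => T ⊆ S) := by simp
    have hsum : ∀ (Z : I → Ω → Bool), (∀ i, Measurable (Z i)) →
        (μ (allSet Z T)).toReal = (μ (cfgSet Z T)).toReal +
          ∑ S ∈ (Finset.univ.filter (fun S : Finset I => T ⊆ S)).erase T,
            (μ (cfgSet Z S)).toReal := by
      intro Z hZ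
      rw [measure_allSet μ Z hZ T, ENNReal.toReal_sum (fun _ _ => measure_ne_top μ _),
        ← Finset.add_sum_erase _ _ hmemT]
    have hXs := hsum X hX
    have hYs := hsum Y hY
    have hrest : ∑ S ∈ (Finset.univ.filter (fun S : Finset I => T ⊆ S)).erase T,
          (μ (cfgSet X S)).toReal =
        ∑ S ∈ (Finset.univ.filter (fun S : Finset I => T ⊆ S)).erase T,
          (μ (cfgSet Y S)).toReal := by
      refine Finset.sum_congr rfl fun S hS => ?_
      have hne : S ≠ T := Finset.ne_of_mem_erase hS
      have hTS : T ⊆ S := (Finset.mem_filter.mp (Finset.mem_of_mem_erase hS)).2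
      have hTS' : T ⊂ S := Finset.ssubset_iff_subset_ne.mpr ⟨hTS, hne.symm⟩
      refine ih S ?_
      have h1 : (Finset.univ \ S).card = Fintype.card I - S.card := by
        rw [Finset.card_sdiff_of_subset (Finset.subset_univ S), Finset.card_univ]
      have h2 : (Finset.univ \ T).card = Fintype.card I - T.card := by
        rw [Finset.card_sdiff_of_subset (Finset.subset_univ T), Finset.card_univ]
      have h3 : T.card < S.card := Finset.card_lt_card hTS'
      have h4 : S.card ≤ Fintype.card I := by
        rw [← Finset.card_univ]; exact Finset.card_le_card (Finset.subset_univ S)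
      omega
    have hzT : (μ (allSet X T)).toReal = (μ (allSet Y T)).toReal := by rw [hz]
    linarith [hXs, hYs]
end aux2

/-- A random network `X` is exchangeable iff `z_B = z_{B′}` whenever
`B, B′ ⊆ D(N)` are nonempty edge sets whose associated graphs (without isolated
vertices) are isomorphic, i.e. whenever some relabeling of the nodes carries `B`
onto `B′`. -/
theorem stmt14 {V Ω : Type*} [Fintype V] [DecidableEq V] [MeasurableSpace Ω]
    (μ : Measure Ω) [IsProbabilityMeasure μ] (X : Dyad V → Ω → Bool)
    (hmeas : ∀ d : Dyad V, Measurable (X d)) :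
    IsExchangeable μ X ↔
      ∀ B B' : Finset (Dyad V), B.Nonempty → B'.Nonempty →
        (∃ π : Equiv.Perm V, B.image (dyadPerm π) = B') →
        μ {ω | ∀ d ∈ B, X d ω = true} = μ {ω | ∀ d ∈ B', X d ω = true} := by
  constructor
  · rintro hEx B B' - - ⟨π, rfl⟩
    set Y : Dyad V → Ω → Bool := fun d ω => X (dyadPerm π d) ω with hYdef
    have hYmeas : ∀ d, Measurable (Y d) := fun d => hmeas _
    have h1 : {ω | ∀ d ∈ B.image (dyadPerm π), X d ω = true} = allSet Y B := by
      ext ω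
      constructor
      · intro hω e he
        exact hω (dyadPerm π e) (Finset.mem_image_of_mem _ he)
      · intro hω d hd
        rcases Finset.mem_image.mp hd with ⟨e, he, rfl⟩
        exact hω e he
    have h0 : {ω | ∀ d ∈ B, X d ω = true} = allSet X B := rfl
    rw [h0, h1, measure_allSet μ X hmeas B, measure_allSet μ Y hYmeas B]
    refine Finset.sum_congr rfl fun S _ => ?_
    exact (hEx π (fun d => decide (d ∈ S))).symm
  · intro h π f
    set Y : Dyad V → Ω → Bool := fun d ω => X (dyadPerm π d) ω with hYdef
    have hYmeas : ∀ d, Measurable (Y d) := fun d => hmeas _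
    set T : Finset (Dyad V) := Finset.univ.filter (fun d => f d = true) with hTdef
    have hf : ∀ d, f d = decide (d ∈ T) := by
      intro d
      by_cases hd : f d = true
      · simp [hTdef, hd]
      · simp [hTdef, hd, Bool.eq_false_iff.mpr hd]
    have h1 : {ω | ∀ d, X (dyadPerm π d) ω = f d} = cfgSet Y T := by
      ext ω; simp only [cfgSet, Set.mem_setOf_eq, hYdef]
      exact forall_congr' fun d => by rw [hf d]
    have h2 : {ω | ∀ d, X d ω = f d} = cfgSet X T := by
      ext ω; simp only [cfgSet, Set.mem_setOf_eq]
      exact forall_congr' fun d => by rw [hf d]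
    rw [h1, h2]
    refine cfg_eq_of_all_eq μ Y X hYmeas hmeas (fun S => ?_) T
    have hS1 : allSet Y S = allSet X (S.image (dyadPerm π)) := by
      ext ω
      constructor
      · intro hω d hd
        rcases Finset.mem_image.mp hd with ⟨e, he, rfl⟩
        exact hω e he
      · intro hω e he
        exact hω (dyadPerm π e) (Finset.mem_image_of_mem _ he)
    rw [hS1]
    rcases S.eq_empty_or_nonempty with rfl | hS
    · rw [Finset.image_empty]
    · exact (h S (S.image (dyadPerm π)) hS (hS.image _) ⟨π, rfl⟩).symm
end

section
/- Let N = {1, …, n} be a finite node set and let F be a Borel probability measure on ℝ. Define, for each simple graph x on N with adjacency indicators (x_{ij}, {i,j} ∈ D(N)), P(x) = ∫_{ℝⁿ} Π_{{i,j} ∈ D(N)} [ e^{(β_i + β_j) x_{ij}} / (1 + e^{β_i + β_j}) ] dFⁿ(β), where Fⁿ is the n-fold product of F. Then P is a probability distribution on the set of simple graphs on N (the marginal beta model), and the random network X with distribution P satisfies: (i) X is exchangeable; (ii) X is dissociated; and (iii) P is summarized, i.e., P(x) = P(y) whenever x and y have the same degree distribution (n_j(x) = n_j(y) for all j ≥ 0).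 -/
open MeasureTheory
open scoped Classical

/-- Both endpoints of the dyad `d` belong to the node set `s`. -/
def dyadIn {V : Type*} (d : Dyad V) (s : Set V) : Prop := ∀ v ∈ d.1, v ∈ s

/-- The sum `β_i + β_j` of the values of `β` at the two endpoints of a dyad. -/
def dyadSum {V : Type*} (β : V → ℝ) (d : Dyad V) : ℝ :=
  Sym2.lift ⟨fun i j => β i + β j, fun _ _ => add_comm _ _⟩ d.1

/-- The marginal beta model: `P(x) = ∫ Π_{ij} e^{(β_i+β_j) x_{ij}} / (1 + e^{β_i+β_j})
dFⁿ(β)`, where `Fⁿ` is the `n`-fold product of the mixing distribution `F`. -/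
noncomputable def betaP {V : Type*} [Fintype V] [DecidableEq V]
    (F : Measure ℝ) (x : Dyad V → Bool) : ℝ :=
  ∫ β : V → ℝ, (∏ d : Dyad V,
      Real.exp (dyadSum β d * (if x d then 1 else 0)) / (1 + Real.exp (dyadSum β d)))
    ∂(Measure.pi fun _ : V => F)

/-- The degree of the node `i` in the network `x`. -/
noncomputable def netDeg {V : Type*} [Fintype V] [DecidableEq V]
    (x : Dyad V → Bool) (i : V) : ℕ :=
  (Finset.univ.filter fun d : Dyad V => i ∈ d.1 ∧ x d = true).card

/-- `netDegDist x j` is the number of nodes of `x` having degree `j`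
(the degree distribution of the network `x`). -/
noncomputable def netDegDist {V : Type*} [Fintype V] [DecidableEq V]
    (x : Dyad V → Bool) (j : ℕ) : ℕ :=
  (Finset.univ.filter fun i : V => netDeg x i = j).card

/-!
Given the node parameters `β`, the dyads are independent, `x_ij = 1` with probability
`e^{βᵢ+βⱼ} / (1 + e^{βᵢ+βⱼ})` (`betaModel`), so the probability of `x` is
`exp (∑ᵢ degᵢ(x) βᵢ) / ∏_{ij} (1 + e^{βᵢ+βⱼ})`. Now integrate against the i.i.d. law `Fⁿ`.
Relabelling the nodes together with `β` preserves both the integrand and `Fⁿ`, which gives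
exchangeability. Networks with the same degree distribution have degree sequences that differ
by a relabelling, so summarization follows from exchangeability and the degree formula. Given
`β`, the probability that the dyads inside `N₁` (resp. `N₂`) take prescribed values is a
function of `β` restricted to `N₁` (resp. `N₂`) alone (`betaMarginal`); these two functions
are independent under `Fⁿ`, which gives dissociation.
-/

open Finset Function ProbabilityTheory

section Combinatorics

variable {ι α R : Type*} [Fintype ι] [DecidableEq ι] [Fintype α] [DecidableEq α] [CommSemiring R]

theorem sum_prod_filter_agreeOn_and {h : ι → α → R} (hh : ∀ i, ∑ a, h i a = 1)
    {P Q : ι → Prop} [DecidablePred P] [DecidablePred Q] (hPQ : ∀ i, P i → ¬ Q i) (f g : ι → α) :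
    ∑ x ∈ univ.filter (fun x : ι → α => (∀ i, P i → x i = f i) ∧ ∀ i, Q i → x i = g i),
        ∏ i, h i (x i)
      = (∏ i ∈ univ.filter P, h i (f i)) * ∏ i ∈ univ.filter Q, h i (g i) := by
  have hset : univ.filter (fun x : ι → α => (∀ i, P i → x i = f i) ∧ ∀ i, Q i → x i = g i)
      = Fintype.piFinset fun i => if P i then {f i} else if Q i then {g i} else univ := by
    ext x
    simp only [mem_filter, mem_univ, true_and, Fintype.mem_piFinset, ← forall_and]
    refine forall_congr' fun i => ?_
    by_cases hP : P i <;> by_cases hQ : Q i <;> simp_all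
  rw [hset, ← prod_univ_sum, prod_filter, prod_filter, ← prod_mul_distrib]
  refine prod_congr rfl fun i _ => ?_
  by_cases hP : P i <;> by_cases hQ : Q i <;> simp_all

theorem sum_prod_filter_agreeOn {h : ι → α → R} (hh : ∀ i, ∑ a, h i a = 1)
    (P : ι → Prop) [DecidablePred P] (f : ι → α) :
    ∑ x ∈ univ.filter (fun x : ι → α => ∀ i, P i → x i = f i), ∏ i, h i (x i)
      = ∏ i ∈ univ.filter P, h i (f i) := by
  simpa using
    sum_prod_filter_agreeOn_and hh (P := P) (Q := fun _ => False) (fun _ _ => not_false) f f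

omit [DecidableEq α] in
theorem sum_prod_eq_one {h : ι → α → R} (hh : ∀ i, ∑ a, h i a = 1) :
    ∑ x : ι → α, ∏ i, h i (x i) = 1 := by
  rw [← Fintype.piFinset_univ, ← prod_univ_sum]
  exact prod_eq_one fun i _ => hh i

end Combinatorics

theorem exists_perm_comp_eq_of_card_filter_eq {α β : Type*} [Fintype α] [DecidableEq β]
    {f g : α → β}
    (h : ∀ b, (univ.filter fun a => f a = b).card = (univ.filter fun a => g a = b).card) :
    ∃ π : Equiv.Perm α, f ∘ π = g := by
  let c (b : β) : {a // g a = b} ≃ {a // f a = b} :=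
    Fintype.equivOfCardEq (by rw [Fintype.card_subtype, Fintype.card_subtype, h])
  refine ⟨(Equiv.sigmaFiberEquiv g).symm.trans
    ((Equiv.sigmaCongrRight c).trans (Equiv.sigmaFiberEquiv f)), funext fun a => ?_⟩
  exact (c (g a) ⟨a, rfl⟩).2

section ProductMeasure

variable {ι : Type*} [Fintype ι]

theorem integral_comp_perm_pi {Ω E : Type*} [MeasurableSpace Ω] [NormedAddCommGroup E]
    [NormedSpace ℝ E] (μ : Measure Ω) [SigmaFinite μ] (π : Equiv.Perm ι) (G : (ι → Ω) → E) :
    ∫ ω, G (ω ∘ π) ∂Measure.pi (fun _ => μ) = ∫ ω, G ω ∂Measure.pi (fun _ => μ) :=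
  (measurePreserving_arrowCongr' (fun _ => μ) (fun _ => μ) π.symm (MeasurableEquiv.refl Ω)
    fun _ => MeasurePreserving.id μ).integral_comp' G

theorem indepFun_pi_of_dependsOn {Ω : ι → Type*} [∀ i, MeasurableSpace (Ω i)]
    (μ : ∀ i, Measure (Ω i)) [∀ i, IsProbabilityMeasure (μ i)]
    {𝓧 𝓨 : Type*} [MeasurableSpace 𝓧] [MeasurableSpace 𝓨]
    {s t : Finset ι} (hst : Disjoint s t) {A : (∀ i, Ω i) → 𝓧} {B : (∀ i, Ω i) → 𝓨}
    (hA : DependsOn A s) (hB : DependsOn B t) (mA : Measurable A) (mB : Measurable B) :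
    IndepFun A B (Measure.pi μ) := by
  have := fun i => nonempty_of_isProbabilityMeasure (μ i)
  obtain ⟨ω₀⟩ : Nonempty (∀ i, Ω i) := inferInstance
  have hrestrict : IndepFun s.restrict t.restrict (Measure.pi μ) :=
    (iIndepFun_pi (X := fun _ => id) fun _ => aemeasurable_id).indepFun_finset s t hst
      fun i => measurable_pi_apply i
  have hA' : A = (A ∘ updateFinset ω₀ s) ∘ s.restrict :=
    funext fun ω => hA fun i hi => by simp [updateFinset, mem_coe.mp hi]
  have hB' : B = (B ∘ updateFinset ω₀ t) ∘ t.restrict :=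
    funext fun ω => hB fun i hi => by simp [updateFinset, mem_coe.mp hi]
  rw [hA', hB']
  exact hrestrict.comp (mA.comp measurable_updateFinset) (mB.comp measurable_updateFinset)

end ProductMeasure

noncomputable def dyadWeight (s : ℝ) (b : Bool) : ℝ :=
  Real.exp (s * (if b then 1 else 0)) / (1 + Real.exp s)

theorem dyadWeight_pos (s : ℝ) (b : Bool) : 0 < dyadWeight s b := by
  unfold dyadWeight
  positivity

theorem dyadWeight_le_one (s : ℝ) (b : Bool) : dyadWeight s b ≤ 1 := by
  rw [dyadWeight, div_le_one (by positivity)]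
  cases b <;> simp [(Real.exp_pos s).le]

theorem sum_dyadWeight (s : ℝ) : ∑ b, dyadWeight s b = 1 := by
  rw [Fintype.sum_bool, dyadWeight, dyadWeight, ← add_div, div_eq_one_iff_eq (by positivity)]
  simp [add_comm]

theorem measurable_dyadWeight (b : Bool) : Measurable (dyadWeight · b) := by
  unfold dyadWeight
  fun_prop

section Dyad

variable {V : Type*}

theorem dyadSum_eq_sum [Fintype V] (β : V → ℝ) (d : Dyad V) :
    dyadSum β d = ∑ v ∈ univ.filter (· ∈ d.1), β v := by
  obtain ⟨d, hd⟩ := d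
  induction d using Sym2.ind with
  | _ i j =>
    have hij : i ≠ j := by simpa [Sym2.mk_isDiag_iff] using hd
    have hfilter : univ.filter (· ∈ s(i, j)) = {i, j} := by
      ext v
      simp [Sym2.mem_iff]
    rw [hfilter, sum_pair hij]
    rfl

theorem measurable_dyadSum [Fintype V] (d : Dyad V) : Measurable (dyadSum · d) := by
  simp_rw [dyadSum_eq_sum]
  exact Finset.measurable_sum _ fun v _ => measurable_pi_apply v

theorem dependsOn_dyadSum [Fintype V] (d : Dyad V) :
    DependsOn (dyadSum · d) {v | v ∈ d.1} := fun β β' h => by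
  simp_rw [dyadSum_eq_sum]
  exact sum_congr rfl fun v hv => h v (mem_filter.mp hv).2

theorem dyadSum_comp_perm (π : Equiv.Perm V) (β : V → ℝ) (d : Dyad V) :
    dyadSum (β ∘ π) d = dyadSum β (dyadPerm π d) := by
  obtain ⟨d, hd⟩ := d
  induction d using Sym2.ind with
  | _ i j => rfl

theorem mem_dyadPerm (π : Equiv.Perm V) (d : Dyad V) (v : V) :
    π v ∈ (dyadPerm π d).1 ↔ v ∈ d.1 := by
  simp [dyadPerm, Sym2.mem_map]

def dyadPermEquiv (π : Equiv.Perm V) : Dyad V ≃ Dyad V where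
  toFun := dyadPerm π
  invFun := dyadPerm π.symm
  left_inv d := Subtype.ext (by simp [dyadPerm, Sym2.map_map])
  right_inv d := Subtype.ext (by simp [dyadPerm, Sym2.map_map])

theorem netDeg_comp_dyadPerm [Fintype V] [DecidableEq V] (π : Equiv.Perm V)
    (x : Dyad V → Bool) (v : V) :
    netDeg (fun d => x (dyadPerm π d)) v = netDeg x (π v) :=
  card_equiv (dyadPermEquiv π) fun d => by simp [dyadPermEquiv, mem_dyadPerm]

theorem not_dyadIn_of_disjoint {N₁ N₂ : Set V} (h : Disjoint N₁ N₂) {d : Dyad V}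
    (h₁ : dyadIn d N₁) : ¬ dyadIn d N₂ := fun h₂ =>
  Set.disjoint_left.mp h (h₁ _ (Sym2.out_fst_mem d.1)) (h₂ _ (Sym2.out_fst_mem d.1))

end Dyad

section BetaModel

variable {V : Type*} [Fintype V] [DecidableEq V]

noncomputable def betaModel (β : V → ℝ) (x : Dyad V → Bool) : ℝ :=
  ∏ d, dyadWeight (dyadSum β d) (x d)

noncomputable def betaMarginal (β : V → ℝ) (N : Set V) (f : Dyad V → Bool) : ℝ :=
  ∏ d ∈ univ.filter (dyadIn · N), dyadWeight (dyadSum β d) (f d)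

theorem betaModel_nonneg (β : V → ℝ) (x : Dyad V → Bool) : 0 ≤ betaModel β x :=
  prod_nonneg fun _ _ => (dyadWeight_pos _ _).le

theorem betaModel_le_one (β : V → ℝ) (x : Dyad V → Bool) : betaModel β x ≤ 1 :=
  prod_le_one (fun _ _ => (dyadWeight_pos _ _).le) fun _ _ => dyadWeight_le_one _ _

theorem measurable_betaModel (x : Dyad V → Bool) : Measurable (betaModel · x) :=
  Finset.measurable_prod _ fun d _ => (measurable_dyadWeight _).comp (measurable_dyadSum d)

theorem measurable_betaMarginal (N : Set V) (f : Dyad V → Bool) :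
    Measurable (betaMarginal · N f) :=
  Finset.measurable_prod _ fun d _ => (measurable_dyadWeight _).comp (measurable_dyadSum d)

theorem dependsOn_betaMarginal (N : Set V) (f : Dyad V → Bool) :
    DependsOn (betaMarginal · N f) N := fun _ _ h =>
  prod_congr rfl fun d hd =>
    congrArg (dyadWeight · (f d)) (dependsOn_dyadSum d fun v hv => h v ((mem_filter.mp hd).2 v hv))

theorem sum_betaModel (β : V → ℝ) : ∑ x, betaModel β x = 1 :=
  sum_prod_eq_one fun _ => sum_dyadWeight _

theorem sum_betaModel_filter (β : V → ℝ) (N : Set V) (f : Dyad V → Bool) :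
    ∑ x ∈ univ.filter (fun x : Dyad V → Bool => ∀ d, dyadIn d N → x d = f d), betaModel β x
      = betaMarginal β N f :=
  sum_prod_filter_agreeOn (fun _ => sum_dyadWeight _) _ f

theorem sum_betaModel_filter_and (β : V → ℝ) {N₁ N₂ : Set V} (hN : Disjoint N₁ N₂)
    (f g : Dyad V → Bool) :
    ∑ x ∈ univ.filter (fun x : Dyad V → Bool =>
        (∀ d, dyadIn d N₁ → x d = f d) ∧ ∀ d, dyadIn d N₂ → x d = g d), betaModel β x
      = betaMarginal β N₁ f * betaMarginal β N₂ g :=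
  sum_prod_filter_agreeOn_and (fun _ => sum_dyadWeight _)
    (fun _ => not_dyadIn_of_disjoint hN) f g

theorem betaModel_comp_dyadPerm (π : Equiv.Perm V) (β : V → ℝ) (x : Dyad V → Bool) :
    betaModel (β ∘ π) (fun d => x (dyadPerm π d)) = betaModel β x := by
  simp_rw [betaModel, dyadSum_comp_perm]
  exact (dyadPermEquiv π).prod_comp fun d => dyadWeight (dyadSum β d) (x d)

theorem sum_dyadSum_mul_eq_sum_netDeg_mul (β : V → ℝ) (x : Dyad V → Bool) :
    ∑ d, dyadSum β d * (if x d then 1 else 0) = ∑ v, (netDeg x v : ℝ) * β v := by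
  simp_rw [dyadSum_eq_sum, sum_filter, sum_mul, ite_mul, zero_mul]
  rw [sum_comm]
  refine sum_congr rfl fun v _ => ?_
  rw [netDeg, natCast_card_filter, sum_mul]
  refine sum_congr rfl fun d _ => ?_
  by_cases hv : v ∈ d.1 <;> by_cases hx : x d <;> simp [hv, hx]

theorem betaModel_eq_exp_div (β : V → ℝ) (x : Dyad V → Bool) :
    betaModel β x
      = Real.exp (∑ v, (netDeg x v : ℝ) * β v) / ∏ d, (1 + Real.exp (dyadSum β d)) := by
  rw [betaModel, ← sum_dyadSum_mul_eq_sum_netDeg_mul, Real.exp_sum, ← prod_div_distrib]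
  rfl

theorem betaModel_congr_netDeg {x y : Dyad V → Bool} (h : netDeg x = netDeg y) (β : V → ℝ) :
    betaModel β x = betaModel β y := by
  rw [betaModel_eq_exp_div, betaModel_eq_exp_div, h]

end BetaModel

section MarginalBetaModel

variable {V : Type*} [Fintype V] [DecidableEq V] (F : Measure ℝ) [IsProbabilityMeasure F]

omit [IsProbabilityMeasure F] in
theorem betaP_eq_integral_betaModel (x : Dyad V → Bool) :
    betaP F x = ∫ β, betaModel β x ∂Measure.pi fun _ => F :=
  rfl

omit [IsProbabilityMeasure F] in
theorem betaP_nonneg (x : Dyad V → Bool) : 0 ≤ betaP F x :=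
  integral_nonneg fun β => betaModel_nonneg β x

theorem sum_betaP (s : Finset (Dyad V → Bool)) :
    ∑ x ∈ s, betaP F x = ∫ β, ∑ x ∈ s, betaModel β x ∂Measure.pi fun _ => F :=
  (integral_finsetSum s fun x _ => Integrable.of_mem_Icc 0 1
    (measurable_betaModel x).aemeasurable
    (ae_of_all _ fun β => ⟨betaModel_nonneg β x, betaModel_le_one β x⟩)).symm

theorem sum_betaP_univ : ∑ x : Dyad V → Bool, betaP F x = 1 := by
  simp [sum_betaP, sum_betaModel]

theorem betaP_comp_dyadPerm (π : Equiv.Perm V) (x : Dyad V → Bool) :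
    betaP F (fun d => x (dyadPerm π d)) = betaP F x := by
  rw [betaP_eq_integral_betaModel, ← integral_comp_perm_pi F π]
  simp_rw [betaModel_comp_dyadPerm]
  rfl

omit [IsProbabilityMeasure F] in
theorem betaP_congr_netDeg {x y : Dyad V → Bool} (h : netDeg x = netDeg y) :
    betaP F x = betaP F y := by
  simp_rw [betaP_eq_integral_betaModel, betaModel_congr_netDeg h]

theorem betaP_eq_of_netDegDist_eq {x y : Dyad V → Bool}
    (h : ∀ j, netDegDist x j = netDegDist y j) : betaP F x = betaP F y := by
  obtain ⟨π, hπ⟩ := exists_perm_comp_eq_of_card_filter_eq h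
  have hdeg : netDeg (fun d => x (dyadPerm π d)) = netDeg y := by
    ext v
    rw [netDeg_comp_dyadPerm, ← hπ, comp_apply]
  rw [← betaP_congr_netDeg F hdeg, betaP_comp_dyadPerm]

theorem betaP_dissociated {N₁ N₂ : Set V} (hN : Disjoint N₁ N₂) (f g : Dyad V → Bool) :
    ∑ x ∈ univ.filter (fun x : Dyad V → Bool =>
        (∀ d, dyadIn d N₁ → x d = f d) ∧ ∀ d, dyadIn d N₂ → x d = g d), betaP F x
      = (∑ x ∈ univ.filter (fun x : Dyad V → Bool => ∀ d, dyadIn d N₁ → x d = f d), betaP F x) *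
        ∑ x ∈ univ.filter (fun x : Dyad V → Bool => ∀ d, dyadIn d N₂ → x d = g d), betaP F x := by
  simp_rw [sum_betaP, sum_betaModel_filter_and _ hN, sum_betaModel_filter]
  have hindep : IndepFun (betaMarginal · N₁ f) (betaMarginal · N₂ g) (Measure.pi fun _ => F) :=
    indepFun_pi_of_dependsOn _ (s := N₁.toFinset) (t := N₂.toFinset)
      (Set.disjoint_toFinset.mpr hN)
      (by simpa using dependsOn_betaMarginal N₁ f) (by simpa using dependsOn_betaMarginal N₂ g)
      (measurable_betaMarginal N₁ f) (measurable_betaMarginal N₂ g)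
  exact hindep.integral_fun_mul_eq_mul_integral (measurable_betaMarginal N₁ f).aestronglyMeasurable
    (measurable_betaMarginal N₂ g).aestronglyMeasurable

end MarginalBetaModel

/-- The marginal beta model `P` is a probability distribution on the set
of simple graphs on `N`, and it is (i) exchangeable, (ii) dissociated, and (iii)
summarized: `P(x)` depends on `x` only through its degree distribution. -/
theorem stmt19 {V : Type*} [Fintype V] [DecidableEq V]
    (F : Measure ℝ) [IsProbabilityMeasure F] :
    -- P is a probability distribution
    ((∀ x : Dyad V → Bool, 0 ≤ betaP F x) ∧
      ∑ x : Dyad V → Bool, betaP F x = 1) ∧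
    -- (i) exchangeable
    (∀ (π : Equiv.Perm V) (x : Dyad V → Bool),
      betaP F (fun d => x (dyadPerm π d)) = betaP F x) ∧
    -- (ii) dissociated
    (∀ N₁ N₂ : Set V, Disjoint N₁ N₂ → ∀ f g : Dyad V → Bool,
      ∑ x ∈ Finset.univ.filter (fun x : Dyad V → Bool =>
          (∀ d : Dyad V, dyadIn d N₁ → x d = f d) ∧
          (∀ d : Dyad V, dyadIn d N₂ → x d = g d)), betaP F x
        = (∑ x ∈ Finset.univ.filter (fun x : Dyad V → Bool =>
              ∀ d : Dyad V, dyadIn d N₁ → x d = f d), betaP F x) *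
          (∑ x ∈ Finset.univ.filter (fun x : Dyad V → Bool =>
              ∀ d : Dyad V, dyadIn d N₂ → x d = g d), betaP F x)) ∧
    -- (iii) summarized
    (∀ x y : Dyad V → Bool,
      (∀ j : ℕ, netDegDist x j = netDegDist y j) → betaP F x = betaP F y) := by
  exact ⟨⟨betaP_nonneg F, sum_betaP_univ F⟩, betaP_comp_dyadPerm F,
    fun _ _ hN => betaP_dissociated F hN, fun _ _ => betaP_eq_of_netDegDist_eq F⟩
end
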